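/- Let $N \ge 3$, $R > 0$, $0 \le s \le 2$, $x_R = (0,\dots,0,-R)$, and $\lambda > R$. Then for every $y \in B_\lambda(x_R) \cap \mathbb{R}^N_+$ (i.e. $|y - x_R| < \lambda$ and $y_N > 0$), one has $\left(\frac{\lambda}{|y - x_R|}\right)^{2s} \frac{1}{\left|x_R + \frac{\lambda^2 (y - x_R)}{|y - x_R|^2}\right|^{s}} \le \frac{1}{|y|^{s}}.$ -/

import Mathlib

/-!
Write `r = ‖y - x_R‖` and `z` for the inversion of `y`. The weight inequality is the `s`-th power
of `λ² ‖y‖ ≤ r² ‖z‖`, and squaring the latter leads to the identity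
`r⁴ ‖z‖² - λ⁴ ‖y‖² = (λ² - r²) (‖x_R‖² (λ² - r²) - 2 λ² ⟪x_R, y⟫)`.
Inside the ball `λ² - r² ≥ 0`, and in the upper half-space `⟪x_R, y⟫ = -R y_N ≤ 0`.
-/

open RealInnerProductSpace EuclideanGeometry

section Inversion

variable {E : Type*} [NormedAddCommGroup E] [InnerProductSpace ℝ E]

theorem inversion_eq_add_smul (c y : E) (lam : ℝ) :
    inversion c lam y = c + (lam ^ 2 / ‖y - c‖ ^ 2) • (y - c) := by
  rw [inversion, dist_eq_norm, div_pow, vsub_eq_sub, vadd_eq_add, add_comm]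

theorem norm_sub_pow_four_mul_norm_inversion_sq {c y : E} (hy : y ≠ c) (lam : ℝ) :
    ‖y - c‖ ^ 4 * ‖inversion c lam y‖ ^ 2 = lam ^ 4 * ‖y‖ ^ 2 +
      (lam ^ 2 - ‖y - c‖ ^ 2) * (‖c‖ ^ 2 * (lam ^ 2 - ‖y - c‖ ^ 2) - 2 * lam ^ 2 * ⟪c, y⟫) := by
  have hr : ‖y - c‖ ≠ 0 := norm_ne_zero_iff.mpr (sub_ne_zero.mpr hy)
  have hy_sq : ‖y‖ ^ 2 = ‖y - c‖ ^ 2 + 2 * ⟪c, y - c⟫ + ‖c‖ ^ 2 := by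
    rw [real_inner_comm, ← norm_add_sq_real, sub_add_cancel]
  rw [inversion_eq_add_smul, norm_add_sq_real, inner_smul_right, norm_smul, mul_pow,
    Real.norm_eq_abs, sq_abs, hy_sq, inner_sub_right, real_inner_self_eq_norm_sq]
  field_simp
  ring

theorem sq_mul_norm_le_norm_sub_sq_mul_norm_inversion {c y : E} {lam : ℝ}
    (hy : ‖y - c‖ ≤ lam) (hcy : ⟪c, y⟫ ≤ 0) :
    lam ^ 2 * ‖y‖ ≤ ‖y - c‖ ^ 2 * ‖inversion c lam y‖ := by
  rcases eq_or_ne y c with rfl | hyc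
  · have : ‖y‖ = 0 := by nlinarith [real_inner_self_eq_norm_sq y, norm_nonneg y]
    rw [this, mul_zero]
    positivity
  have hlam : 0 ≤ lam := (norm_nonneg _).trans hy
  have hgap : 0 ≤ lam ^ 2 - ‖y - c‖ ^ 2 := sub_nonneg.mpr (pow_le_pow_left₀ (norm_nonneg _) hy 2)
  refine (pow_le_pow_iff_left₀ (by positivity) (by positivity) two_ne_zero).mp ?_
  have := norm_sub_pow_four_mul_norm_inversion_sq hyc lam
  nlinarith [mul_nonneg hgap (mul_nonneg (sq_nonneg ‖c‖) hgap),
    mul_nonneg hgap (mul_nonneg (sq_nonneg lam) (neg_nonneg.mpr hcy))]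

end Inversion

theorem rpow_mul_one_div_rpow_le_one_div_rpow {lam r a b s : ℝ} (hs : 0 ≤ s) (hlam : 0 < lam)
    (hr : 0 < r) (hb : 0 < b) (h : lam ^ 2 * b ≤ r ^ 2 * a) :
    (lam / r) ^ (2 * s) * (1 / a ^ s) ≤ 1 / b ^ s := by
  have ha : 0 < a := by nlinarith [mul_pos (pow_pos hlam 2) hb]
  have hbase : (lam / r) ^ 2 * (1 / a) ≤ 1 / b := by
    rwa [div_pow, div_mul_div_comm, mul_one, div_le_div_iff₀ (by positivity) hb, one_mul]
  rw [Real.rpow_mul (by positivity), Real.rpow_two, one_div, one_div, ← Real.inv_rpow ha.le,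
    ← Real.inv_rpow hb.le, ← Real.mul_rpow (by positivity) (by positivity)]
  simpa only [one_div] using Real.rpow_le_rpow (by positivity) hbase hs

theorem inversion_hardy_weight_inequality (N : ℕ) (hN : 3 ≤ N) (R : ℝ) (hR : 0 < R)
    (s : ℝ) (hs0 : 0 ≤ s)
    (xR : EuclideanSpace ℝ (Fin N))
    (hxR : ∀ i : Fin N, xR i = if (i : ℕ) = N - 1 then -R else 0)
    (lam : ℝ) :
    ∀ y : EuclideanSpace ℝ (Fin N), ‖y - xR‖ < lam → 0 < y ⟨N - 1, by omega⟩ →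
      (lam / ‖y - xR‖) ^ (2 * s) *
          (1 / ‖xR + (lam ^ 2 / ‖y - xR‖ ^ 2) • (y - xR)‖ ^ s)
        ≤ 1 / ‖y‖ ^ s := by
  intro y hy hyN
  set n : Fin N := ⟨N - 1, by omega⟩
  have hxR_single : xR = EuclideanSpace.single n (-R) := by
    ext i
    rw [hxR, PiLp.single_apply]
    simp only [n, Fin.ext_iff]
  have hinner : ⟪xR, y⟫ = -R * y n := by
    rw [hxR_single, EuclideanSpace.inner_single_left]
    simp
  have hyxR : y ≠ xR := fun h => by
    have := congrArg (· n) h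
    simp only [hxR_single, PiLp.single_apply, if_pos] at this
    linarith
  rw [← inversion_eq_add_smul]
  refine rpow_mul_one_div_rpow_le_one_div_rpow hs0 ((norm_nonneg _).trans_lt hy)
    (norm_pos_iff.mpr (sub_ne_zero.mpr hyxR)) (norm_pos_iff.mpr fun h => by simp [h] at hyN) ?_
  exact sq_mul_norm_le_norm_sub_sq_mul_norm_inversion hy.le (by rw [hinner]; nlinarith)
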